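/- arXiv:0902.4097 — 4 statements merged into one kernel-verified Lean document; each statement's English description precedes it below -/
import Mathlib

section
/- Let 0 < 2M ≤ R₁, let ρ : [2M, R₁] → ℝ be nonnegative and integrable, define m(r) = M - ∫_r^{R₁} 4πη²ρ(η) dη and assume 0 ≤ 2m(r)/r < 1 for all r ∈ [2M, R₁], and set e^{2λ(r)} = (1 - 2m(r)/r)⁻¹. Then for all r ∈ [2M, R₁], exp(-2 ∫_r^{R₁} 4πη ρ(η) e^{2λ(η)} dη) ≥ (r - 2M)/(r - 2m(r)). -/
/-! With `q η = 8πη²ρ(η)` and `B(s) = ∫_s^{R₁} q`, the mass formula gives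
`s - 2m(s) = (s - 2M) + B(s)`, so the integrand `2 · 4πηρe^{2λ} = q/(η - 2m(η))` is at most
`q/(a + B)` on `[r, R₁]`, where `a = r - 2M`. By Lebesgue's differentiation theorem
`-log (a + B)` has derivative `q/(a + B)` almost everywhere, and it is monotone, so the integral of
its derivative is at most its increment `log (a + B(r)) - log a = log ((r - 2m(r))/(r - 2M))`.
Exponentiating gives the claim. -/

open Real MeasureTheory intervalIntegral
open Set

section

variable {q : ℝ → ℝ} {a r R : ℝ}

lemma integral_nonneg_of_mem_Icc (hq₀ : ∀ x ∈ Icc r R, 0 ≤ q x) {s : ℝ} (hs : s ∈ Icc r R) :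
    0 ≤ ∫ t in s..R, q t :=
  integral_nonneg hs.2 fun x hx => hq₀ x ⟨hs.1.trans hx.1, hx.2⟩

lemma monotoneOn_neg_log_add_integral (hq : IntervalIntegrable q volume r R)
    (hq₀ : ∀ x ∈ Icc r R, 0 ≤ q x) (ha : 0 < a) :
    MonotoneOn (fun s => -log (a + ∫ t in s..R, q t)) (Icc r R) := by
  intro s hs u hu hsu
  have hsplit : (∫ t in s..u, q t) + ∫ t in u..R, q t = ∫ t in s..R, q t :=
    integral_add_adjacent_intervals
      (hq.mono_set (uIcc_subset_uIcc (Icc_subset_uIcc hs) (Icc_subset_uIcc hu)))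
      (hq.mono_set (uIcc_subset_uIcc (Icc_subset_uIcc hu) right_mem_uIcc))
  have hsu₀ : 0 ≤ ∫ t in s..u, q t :=
    integral_nonneg hsu fun x hx => hq₀ x ⟨hs.1.trans hx.1, hx.2.trans hu.2⟩
  have hu₀ := integral_nonneg_of_mem_Icc hq₀ hu
  dsimp only
  gcongr
  linarith

lemma ae_hasDerivAt_neg_log_add_integral (hq : IntervalIntegrable q volume r R)
    (hq₀ : ∀ x ∈ Icc r R, 0 ≤ q x) (ha : 0 < a) :
    ∀ᵐ x, x ∈ Icc r R →
      HasDerivAt (fun s => -log (a + ∫ t in s..R, q t)) (q x / (a + ∫ t in x..R, q t)) x := by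
  filter_upwards [hq.ae_hasDerivAt_integral] with x hx hxI
  have hB : HasDerivAt (fun s => ∫ t in s..R, q t) (-q x) x := by
    have hsymm : (fun s => ∫ t in s..R, q t) = fun s => -∫ t in R..s, q t :=
      funext fun s => integral_symm _ _
    rw [hsymm]
    exact (hx (Icc_subset_uIcc hxI) R right_mem_uIcc).fun_neg
  have hpos : 0 < a + ∫ t in x..R, q t := by
    linarith [integral_nonneg_of_mem_Icc hq₀ hxI]
  simpa [neg_div] using ((hB.const_add a).log hpos.ne').fun_neg

lemma deriv_neg_log_add_integral_ae_eq (hq : IntervalIntegrable q volume r R)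
    (hq₀ : ∀ x ∈ Icc r R, 0 ≤ q x) (ha : 0 < a) (hrR : r ≤ R) :
    ∀ᵐ x, x ∈ uIoc r R →
      deriv (fun s => -log (a + ∫ t in s..R, q t)) x = q x / (a + ∫ t in x..R, q t) := by
  filter_upwards [ae_hasDerivAt_neg_log_add_integral hq hq₀ ha] with x hx hxI
  rw [uIoc_of_le hrR] at hxI
  exact (hx (Ioc_subset_Icc_self hxI)).deriv

lemma intervalIntegrable_div_add_integral (hq : IntervalIntegrable q volume r R)
    (hq₀ : ∀ x ∈ Icc r R, 0 ≤ q x) (ha : 0 < a) (hrR : r ≤ R) :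
    IntervalIntegrable (fun x => q x / (a + ∫ t in x..R, q t)) volume r R := by
  have hmono := monotoneOn_neg_log_add_integral hq hq₀ ha
  rw [← uIcc_of_le hrR] at hmono
  exact hmono.intervalIntegrable_deriv.congr_ae
    ((ae_restrict_iff' measurableSet_uIoc).mpr (deriv_neg_log_add_integral_ae_eq hq hq₀ ha hrR))

theorem integral_div_add_integral_le (hq : IntervalIntegrable q volume r R)
    (hq₀ : ∀ x ∈ Icc r R, 0 ≤ q x) (ha : 0 < a) (hrR : r ≤ R) :
    ∫ x in r..R, q x / (a + ∫ t in x..R, q t) ≤ log (a + ∫ t in r..R, q t) - log a := by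
  have hmono := monotoneOn_neg_log_add_integral hq hq₀ ha
  rw [← uIcc_of_le hrR] at hmono
  have hle := hmono.intervalIntegral_deriv_mem_uIcc
  rw [uIcc_of_le (sub_nonneg.2 (hmono left_mem_uIcc right_mem_uIcc hrR)),
    integral_congr_ae (deriv_neg_log_add_integral_ae_eq hq hq₀ ha hrR)] at hle
  have h := hle.2
  simp only [integral_same, add_zero] at h
  linarith

end

lemma sub_two_mul_mass_eq {M R₁ : ℝ} {ρ m : ℝ → ℝ}
    (hm : ∀ r, m r = M - ∫ η in r..R₁, 4 * π * η ^ 2 * ρ η) (s : ℝ) :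
    s - 2 * m s = s - 2 * M + ∫ η in s..R₁, 8 * π * η ^ 2 * ρ η := by
  rw [hm, show (8 : ℝ) = 2 * 4 by norm_num]
  simp only [mul_assoc, intervalIntegral.integral_const_mul]
  ring

lemma two_mul_mul_inv_one_sub_div_le {η μ ρ d : ℝ} (hη : 0 < η) (hρ : 0 ≤ ρ) (hd : 0 < d)
    (hdμ : d ≤ η - μ) :
    2 * (4 * π * η * ρ * (1 - μ / η)⁻¹) ≤ 8 * π * η ^ 2 * ρ / d := by
  have hημ : 0 < η - μ := hd.trans_le hdμ
  rw [one_sub_div hη.ne', inv_div]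
  calc 2 * (4 * π * η * ρ * (η / (η - μ))) = 8 * π * η ^ 2 * ρ / (η - μ) := by ring
    _ ≤ 8 * π * η ^ 2 * ρ / d := by gcongr

lemma div_le_exp_neg_of_le_log_sub_log {a b x : ℝ} (ha : 0 < a) (hb : 0 < b)
    (hx : x ≤ log b - log a) : a / b ≤ exp (-x) := by
  rw [← exp_log (div_pos ha hb), log_div ha.ne' hb.ne']
  exact exp_le_exp.2 (by linarith)

theorem monotonicity_lemma_general
    (M R₁ : ℝ) (hM : 0 < 2 * M)
    (ρ : ℝ → ℝ) (hρ : ∀ r ∈ Set.Icc (2 * M) R₁, 0 ≤ ρ r)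
    (hρint : IntegrableOn ρ (Set.Icc (2 * M) R₁))
    (m e2lam : ℝ → ℝ)
    (hm : ∀ r, m r = M - ∫ η in r..R₁, 4 * π * η ^ 2 * ρ η)
    (he2lam : ∀ r, e2lam r = (1 - 2 * m r / r)⁻¹)
    (hint : IntegrableOn (fun η => 4 * π * η * ρ η * e2lam η) (Set.Icc (2 * M) R₁)) :
    ∀ r ∈ Set.Icc (2 * M) R₁,
      Real.exp (-2 * ∫ η in r..R₁, 4 * π * η * ρ η * e2lam η) ≥
        (r - 2 * M) / (r - 2 * m r) := by
  intro r hr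
  rcases hr.1.eq_or_lt with rfl | hlt
  · rw [sub_self, zero_div]
    exact (exp_pos _).le
  set q : ℝ → ℝ := fun η => 8 * π * η ^ 2 * ρ η
  have hsub : Icc r R₁ ⊆ Icc (2 * M) R₁ := Icc_subset_Icc_left hr.1
  have hq₀ : ∀ x ∈ Icc r R₁, 0 ≤ q x := fun x hx => by
    have := hρ x (hsub hx)
    positivity
  have hq : IntervalIntegrable q volume r R₁ :=
    (intervalIntegrable_iff_integrableOn_Icc_of_le hr.2).2 <|
      (hρint.mono_set hsub).continuousOn_mul (by fun_prop) isCompact_Icc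
  have hpos : ∀ η ∈ Icc r R₁, 0 < r - 2 * M + ∫ t in η..R₁, q t := fun η hη => by
    linarith [integral_nonneg_of_mem_Icc hq₀ hη]
  have hcompare : 2 * ∫ η in r..R₁, 4 * π * η * ρ η * e2lam η ≤
      ∫ η in r..R₁, q η / (r - 2 * M + ∫ t in η..R₁, q t) := by
    rw [← intervalIntegral.integral_const_mul]
    refine integral_mono_on hr.2
      (((intervalIntegrable_iff_integrableOn_Icc_of_le hr.2).2 (hint.mono_set hsub)).const_mul 2)
      (intervalIntegrable_div_add_integral hq hq₀ (by linarith) hr.2) fun η hη => ?_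
    rw [he2lam]
    exact two_mul_mul_inv_one_sub_div_le (hM.trans_le (hsub hη).1) (hρ η (hsub hη))
      (hpos η hη) (by linarith [sub_two_mul_mass_eq hm η, hη.1])
  rw [ge_iff_le, neg_mul]
  refine div_le_exp_neg_of_le_log_sub_log (by linarith) ?_ ?_
  · linarith [hpos r (left_mem_Icc.2 hr.2), sub_two_mul_mass_eq hm r]
  · rw [sub_two_mul_mass_eq hm r]
    exact hcompare.trans (integral_div_add_integral_le hq hq₀ (by linarith) hr.2)

theorem monotonicity_lemma
    (M R₁ : ℝ) (hM : 0 < 2 * M) (hMR : 2 * M ≤ R₁)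
    (ρ : ℝ → ℝ) (hρ : ∀ r ∈ Set.Icc (2 * M) R₁, 0 ≤ ρ r)
    (hρint : IntegrableOn ρ (Set.Icc (2 * M) R₁))
    (m e2lam : ℝ → ℝ)
    (hm : ∀ r, m r = M - ∫ η in r..R₁, 4 * π * η ^ 2 * ρ η)
    (hmr : ∀ r ∈ Set.Icc (2 * M) R₁, 0 ≤ 2 * m r / r ∧ 2 * m r / r < 1)
    (he2lam : ∀ r, e2lam r = (1 - 2 * m r / r)⁻¹)
    (hint : IntegrableOn (fun η => 4 * π * η * ρ η * e2lam η) (Set.Icc (2 * M) R₁)) :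
    ∀ r ∈ Set.Icc (2 * M) R₁,
      Real.exp (-2 * ∫ η in r..R₁, 4 * π * η * ρ η * e2lam η) ≥
        (r - 2 * M) / (r - 2 * m r) :=
  monotonicity_lemma_general M R₁ hM ρ hρ hρint m e2lam hm he2lam hint
end

section
/- Let M > 0, R₁ > 2M, B, C, κ > 0 with BC ≥ 1 - 2M/R(0) + κ for the initial value R(0) ∈ (2M, R₁]. Let R : [0,T) → (2M, R₁] be differentiable satisfying 1/R(t) ≥ 1/R(0) + (BC/(2M))(1 - e^{-2Mt/R₁²}) for all t while R(t) ≥ 2M. Then R(t) < (2M/(1+κ))·(1 - e^{-2Mt/R₁²})⁻¹, and consequently there exists t* > 0, depending only on M, R₁, κ, such that R(t*) ≤ 2M. -/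
/-!
Substituting the lower bound on `B * C` into the lower bound on `1 / R t` gives
`1 / R t ≥ (1 + κ) / (2M) * (1 - e^{-2Mt/R₁²}) + e^{-2Mt/R₁²} / R 0`, and dropping the last (positive)
term and inverting yields the envelope `R t < 2M / (1 + κ) * (1 - e^{-2Mt/R₁²})⁻¹`. The envelope decreases
to `2M / (1 + κ) < 2M` and equals `2M` exactly at `t* = R₁² / (2M) * log ((1 + κ) / κ)`, so `R` cannot
stay above `2M` past `t*`.
-/

open Real

lemma one_div_ge_add_of_ge {M κ b r₀ r E : ℝ} (hM : 0 < M) (hE : E ≤ 1)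
    (hb : 1 - 2 * M / r₀ + κ ≤ b) (h : 1 / r₀ + b / (2 * M) * (1 - E) ≤ 1 / r) :
    (1 + κ) / (2 * M) * (1 - E) + E / r₀ ≤ 1 / r := by
  have hb' : (1 - 2 * M / r₀ + κ) / (2 * M) * (1 - E) ≤ b / (2 * M) * (1 - E) := by
    gcongr
  have hsplit : 1 / r₀ + (1 - 2 * M / r₀ + κ) / (2 * M) * (1 - E)
      = (1 + κ) / (2 * M) * (1 - E) + E / r₀ := by
    field_simp
    ring
  linarith

lemma lt_envelope_of_one_div_ge {M κ b r₀ r E : ℝ} (hM : 0 < M) (hκ : 0 < 1 + κ) (hr₀ : 0 < r₀)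
    (hr : 0 < r) (hE₀ : 0 < E) (hE₁ : E < 1) (hb : 1 - 2 * M / r₀ + κ ≤ b)
    (h : 1 / r₀ + b / (2 * M) * (1 - E) ≤ 1 / r) :
    r < 2 * M / (1 + κ) * (1 - E)⁻¹ := by
  have hlower := one_div_ge_add_of_ge hM hE₁.le hb h
  have hc : 0 < (1 + κ) / (2 * M) * (1 - E) := by
    have : 0 < 1 - E := by linarith
    positivity
  have hlt : (1 + κ) / (2 * M) * (1 - E) < 1 / r := by
    have : 0 < E / r₀ := by positivity
    linarith
  calc r < 1 / ((1 + κ) / (2 * M) * (1 - E)) := (lt_one_div hr hc).mpr hlt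
    _ = 2 * M / (1 + κ) * (1 - E)⁻¹ := by rw [one_div, mul_inv, inv_div]

noncomputable def crossingTime (M R₁ κ : ℝ) : ℝ := R₁ ^ 2 / (2 * M) * log ((1 + κ) / κ)

lemma crossingTime_pos {M R₁ κ : ℝ} (hM : 0 < M) (hR₁ : R₁ ≠ 0) (hκ : 0 < κ) :
    0 < crossingTime M R₁ κ := by
  have : 0 < log ((1 + κ) / κ) := log_pos (by rw [lt_div_iff₀ hκ]; linarith)
  unfold crossingTime
  positivity

lemma exp_neg_crossingTime {M R₁ κ : ℝ} (hM : 0 < M) (hR₁ : R₁ ≠ 0) (hκ : 0 < κ) :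
    exp (-2 * M * crossingTime M R₁ κ / R₁ ^ 2) = κ / (1 + κ) := by
  have harg : -2 * M * crossingTime M R₁ κ / R₁ ^ 2 = -log ((1 + κ) / κ) := by
    unfold crossingTime
    field_simp
  rw [harg, exp_neg, exp_log (by positivity), inv_div]

lemma envelope_crossingTime {M R₁ κ : ℝ} (hM : 0 < M) (hR₁ : R₁ ≠ 0) (hκ : 0 < κ) :
    2 * M / (1 + κ) * (1 - exp (-2 * M * crossingTime M R₁ κ / R₁ ^ 2))⁻¹ = 2 * M := by
  rw [exp_neg_crossingTime hM hR₁ hκ]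
  field_simp
  ring

theorem crossing_estimate
    (M R₁ κ : ℝ) (hM : 0 < M) (hR₁ : 2 * M < R₁) (hκ : 0 < κ) :
    ∃ tstar > 0, ∀ (B C T : ℝ) (R : ℝ → ℝ),
      0 < B → 0 < C → 0 < T → Differentiable ℝ R →
      (∀ t ∈ Set.Ico (0:ℝ) T, R t ∈ Set.Ioc (2 * M) R₁) →
      B * C ≥ 1 - 2 * M / R 0 + κ →
      (∀ t ∈ Set.Ico (0:ℝ) T,
        1 / R t ≥ 1 / R 0 + (B * C / (2 * M)) * (1 - Real.exp (-2 * M * t / R₁ ^ 2))) →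
      (∀ t ∈ Set.Ioo (0:ℝ) T,
        R t < (2 * M / (1 + κ)) * (1 - Real.exp (-2 * M * t / R₁ ^ 2))⁻¹) ∧
      T ≤ tstar := by
  have hR₁0 : R₁ ≠ 0 := by linarith
  refine ⟨crossingTime M R₁ κ, crossingTime_pos hM hR₁0 hκ, ?_⟩
  intro B C T R _ _ hT _ hrange hBC hinv
  have hpos : ∀ t ∈ Set.Ico (0:ℝ) T, 0 < R t := fun t ht => by linarith [(hrange t ht).1]
  have hR0 : (0:ℝ) ∈ Set.Ico 0 T := ⟨le_rfl, hT⟩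
  have envelope : ∀ t ∈ Set.Ioo (0:ℝ) T,
      R t < (2 * M / (1 + κ)) * (1 - exp (-2 * M * t / R₁ ^ 2))⁻¹ := by
    intro t ht
    have hdecay : exp (-2 * M * t / R₁ ^ 2) < 1 :=
      exp_lt_one_iff.mpr (div_neg_of_neg_of_pos (by nlinarith [ht.1]) (by positivity))
    exact lt_envelope_of_one_div_ge hM (by linarith) (hpos 0 hR0) (hpos t (Set.Ioo_subset_Ico_self ht))
      (exp_pos _) hdecay hBC (hinv t (Set.Ioo_subset_Ico_self ht))
  refine ⟨envelope, ?_⟩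
  by_contra! hlate
  have hts : crossingTime M R₁ κ ∈ Set.Ioo 0 T := ⟨crossingTime_pos hM hR₁0 hκ, hlate⟩
  have hbelow := envelope _ hts
  rw [envelope_crossingTime hM hR₁0 hκ] at hbelow
  linarith [(hrange _ (Set.Ioo_subset_Ico_self hts)).1]
end

section
/- Let R : [0,∞) → (0,∞) be differentiable and satisfy Ṙ(s) ≤ -B·C·exp(-2∫₀ˢ M/R²(τ) dτ) for constants B, C, M > 0 and with R(s) ≤ R₁ for all s. Then for all t ≥ 0, 1/R(t) ≥ 1/R(0) + (BC/(2M))(1 - exp(-2∫₀ᵗ M/R²(s) ds)) ≥ 1/R(0) + (BC/(2M))(1 - e^{-2Mt/R₁²}). -/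
open Real MeasureTheory intervalIntegral

/-!
With `I s = ∫₀ˢ M / R²`, one has `(1/R)' = -R'/R² ≥ BC e^{-2I} / R² = -(BC/(2M)) (e^{-2I})'`,
so `1/R + (BC/(2M)) e^{-2I}` is nondecreasing on `[0, ∞)`; comparing its values at `0` and `t`
gives the first inequality. The second follows from `I t ≥ M t / R₁²`, since `0 < R ≤ R₁`.
-/

open Set Topology

theorem ContinuousOn.hasDerivWithinAt_integral_Ici {f : ℝ → ℝ} {a b : ℝ}
    (hf : ContinuousOn f (Ici a)) (hb : a ≤ b) :
    HasDerivWithinAt (fun u => ∫ x in a..u, f x) (f b) (Ici a) b := by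
  have hint : IntervalIntegrable f volume a b :=
    (hf.mono (uIcc_of_le hb ▸ Icc_subset_Ici_self)).intervalIntegrable
  have hmeas := hf.stronglyMeasurableAtFilter_nhdsWithin measurableSet_Ici b (μ := volume)
  rcases hb.eq_or_lt with rfl | hab
  · exact integral_hasDerivWithinAt_right hint
      (hmeas.filter_mono (nhdsWithin_mono _ Ioi_subset_Ici_self))
      ((hf a self_mem_Ici).mono Ioi_subset_Ici_self)
  · have hnhds : Ici a ∈ 𝓝 b := Ici_mem_nhds hab
    rw [nhdsWithin_eq_nhds.mpr hnhds] at hmeas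
    exact (integral_hasDerivAt_right hint hmeas (hf.continuousAt hnhds)).hasDerivWithinAt

theorem monotoneOn_Ici_of_hasDerivWithinAt_nonneg {f f' : ℝ → ℝ} {a : ℝ}
    (hf : ∀ x ∈ Ici a, HasDerivWithinAt f (f' x) (Ici a) x) (hf' : ∀ x ∈ Ioi a, 0 ≤ f' x) :
    MonotoneOn f (Ici a) :=
  monotoneOn_of_hasDerivWithinAt_nonneg (convex_Ici a)
    (fun x hx => (hf x hx).continuousWithinAt)
    (fun x hx => by
      rw [interior_Ici] at hx ⊢
      exact (hf x (mem_Ici_of_Ioi hx)).mono Ioi_subset_Ici_self)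
    (fun x hx => hf' x (by rwa [interior_Ici] at hx))

theorem mul_sub_le_integral_of_le_on {f : ℝ → ℝ} {a b c : ℝ} (hab : a ≤ b)
    (hf : IntervalIntegrable f volume a b) (hc : ∀ x ∈ Icc a b, c ≤ f x) :
    c * (b - a) ≤ ∫ x in a..b, f x := by
  calc c * (b - a) = ∫ _ in a..b, c := by simp [mul_comm]
    _ ≤ ∫ x in a..b, f x := integral_mono_on hab intervalIntegrable_const hf hc

theorem continuousOn_const_div_sq_Ici {a M : ℝ} {R R' : ℝ → ℝ} (hR0 : ∀ s ≥ a, R s ≠ 0)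
    (hR : ∀ s ≥ a, HasDerivAt R (R' s) s) : ContinuousOn (fun s => M / R s ^ 2) (Ici a) :=
  continuousOn_const.div (fun s hs => ((hR s hs).continuousAt.pow 2).continuousWithinAt)
    fun s hs => pow_ne_zero 2 (hR0 s hs)

theorem monotoneOn_one_div_add_exp_integral {a k M : ℝ} (hM : M ≠ 0) {R R' : ℝ → ℝ}
    (hR0 : ∀ s ≥ a, R s ≠ 0) (hR : ∀ s ≥ a, HasDerivAt R (R' s) s)
    (hR' : ∀ s ≥ a, R' s ≤ -k * exp (-2 * ∫ τ in a..s, M / R τ ^ 2)) :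
    MonotoneOn (fun s => 1 / R s + k / (2 * M) * exp (-2 * ∫ τ in a..s, M / R τ ^ 2))
      (Ici a) := by
  refine monotoneOn_Ici_of_hasDerivWithinAt_nonneg
    (f' := fun s => (-R' s - k * exp (-2 * ∫ τ in a..s, M / R τ ^ 2)) / R s ^ 2)
    (fun s hs => ?_) (fun s hs => ?_)
  · have hinv := ((hR s hs).inv (hR0 s hs)).hasDerivWithinAt (s := Ici a)
    have hI := (continuousOn_const_div_sq_Ici (M := M) hR0 hR).hasDerivWithinAt_integral_Ici hs
    have hE := ((hI.const_mul (-2)).exp).const_mul (k / (2 * M))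
    have hRs := hR0 s hs
    simp only [one_div]
    exact (hinv.add hE).congr_deriv (by field_simp; ring)
  · exact div_nonneg (by linarith [hR' s hs.le]) (sq_nonneg _)

theorem ode_comparison_estimate_general
    (B C M R₁ : ℝ) (hB : 0 < B) (hC : 0 < C) (hM : 0 < M)
    (R R' : ℝ → ℝ)
    (hRpos : ∀ s : ℝ, 0 ≤ s → 0 < R s)
    (hRle : ∀ s : ℝ, 0 ≤ s → R s ≤ R₁)
    (hRderiv : ∀ s : ℝ, 0 ≤ s → HasDerivAt R (R' s) s)
    (hR' : ∀ s : ℝ, 0 ≤ s →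
      R' s ≤ -B * C * Real.exp (-2 * ∫ τ in (0:ℝ)..s, M / R τ ^ 2)) :
    ∀ t : ℝ, 0 ≤ t →
      1 / R t ≥ 1 / R 0 +
        (B * C / (2 * M)) * (1 - Real.exp (-2 * ∫ s in (0:ℝ)..t, M / R s ^ 2)) ∧
      1 / R 0 + (B * C / (2 * M)) * (1 - Real.exp (-2 * ∫ s in (0:ℝ)..t, M / R s ^ 2)) ≥
        1 / R 0 + (B * C / (2 * M)) * (1 - Real.exp (-2 * M * t / R₁ ^ 2)) := by
  intro t ht
  have hR0 : ∀ s ≥ (0 : ℝ), R s ≠ 0 := fun s hs => (hRpos s hs).ne'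
  have hmono := monotoneOn_one_div_add_exp_integral (k := B * C) hM.ne' hR0 hRderiv
    fun s hs => (hR' s hs).trans_eq (by ring)
  have h0t := hmono self_mem_Ici ht ht
  simp only [integral_same, mul_zero, exp_zero, mul_one] at h0t
  have hI_ge : M / R₁ ^ 2 * (t - 0) ≤ ∫ s in (0:ℝ)..t, M / R s ^ 2 :=
    mul_sub_le_integral_of_le_on ht
      ((continuousOn_const_div_sq_Ici hR0 hRderiv).mono
        (uIcc_of_le ht ▸ Icc_subset_Ici_self)).intervalIntegrable
      fun s hs => div_le_div_of_nonneg_left hM.le (pow_pos (hRpos s hs.1) 2)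
        (pow_le_pow_left₀ (hRpos s hs.1).le (hRle s hs.1) 2)
  refine ⟨by linarith, ?_⟩
  gcongr
  linarith [show -2 * M * t / R₁ ^ 2 = -2 * (M / R₁ ^ 2 * (t - 0)) by ring]

theorem ode_comparison_estimate
    (B C M R₁ : ℝ) (hB : 0 < B) (hC : 0 < C) (hM : 0 < M) (hR₁ : 0 < R₁)
    (R R' : ℝ → ℝ)
    (hRpos : ∀ s : ℝ, 0 ≤ s → 0 < R s)
    (hRle : ∀ s : ℝ, 0 ≤ s → R s ≤ R₁)
    (hRderiv : ∀ s : ℝ, 0 ≤ s → HasDerivAt R (R' s) s)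
    (hR' : ∀ s : ℝ, 0 ≤ s →
      R' s ≤ -B * C * Real.exp (-2 * ∫ τ in (0:ℝ)..s, M / R τ ^ 2)) :
    ∀ t : ℝ, 0 ≤ t →
      1 / R t ≥ 1 / R 0 +
        (B * C / (2 * M)) * (1 - Real.exp (-2 * ∫ s in (0:ℝ)..t, M / R s ^ 2)) ∧
      1 / R 0 + (B * C / (2 * M)) * (1 - Real.exp (-2 * ∫ s in (0:ℝ)..t, M / R s ^ 2)) ≥
        1 / R 0 + (B * C / (2 * M)) * (1 - Real.exp (-2 * M * t / R₁ ^ 2)) :=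
  ode_comparison_estimate_general B C M R₁ hB hC hM R R' hRpos hRle hRderiv hR'
end

section
/- Let m : [0,T] × [0,∞) → ℝ be C¹ with ∂m/∂t(t,r) = -4πr² e^{(μ-λ)(t,r)} j(t,r) and ∂m/∂r(t,r) = 4πr²ρ(t,r), and let α : [0,T] → (0,∞) solve α̇ = ((j - δ)/(ρ + δ))·e^{(μ-λ)(t,α)} with δ > 0, j ≤ 0, ρ ≥ 0, α ≤ R₁, and e^{μ-λ} ≤ 1. Then (d/dt) m(t,α(t)) ≥ -4πR₁²δ, and hence m(t,α(t)) ≥ m(0,α(0)) - 4πR₁²δ·t for all t ∈ [0,T]. -/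
/-!
Along the curve `α` the chain rule gives
`d/dt m(t, α t) = 4π α² e^{μ-λ} ((j - δ) ρ / (ρ + δ) - j)`, and
`(j - δ) ρ / (ρ + δ) - j = -δ (ρ + j) / (ρ + δ) ≥ -δ` because `j ≤ 0 ≤ ρ`.
With `α ≤ R₁` and `e^{μ-λ} ≤ 1` the derivative is at least `-4π R₁² δ`, and the mean value
theorem integrates this lower bound.
-/

open Real Set

theorem hasDerivAt_comp_curve_of_partials {E : Type*} [NormedAddCommGroup E] [NormedSpace ℝ E]
    {f : ℝ → ℝ → E} {x : ℝ → ℝ} {t v : ℝ} {ft fr : E}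
    (hf : DifferentiableAt ℝ (fun q : ℝ × ℝ => f q.1 q.2) (t, x t))
    (ht : HasDerivAt (fun s => f s (x t)) ft t) (hr : HasDerivAt (f t) fr (x t))
    (hx : HasDerivAt x v t) :
    HasDerivAt (fun s => f s (x s)) (ft + v • fr) t := by
  set L := fderiv ℝ (fun q : ℝ × ℝ => f q.1 q.2) (t, x t)
  have hL : HasFDerivAt (fun q : ℝ × ℝ => f q.1 q.2) L (t, x t) := hf.hasFDerivAt
  have hL₁ : L (1, 0) = ft := by
    have := hL.comp_hasDerivAt t ((hasDerivAt_id t).prodMk (hasDerivAt_const t (x t)))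
    exact this.unique ht
  have hL₂ : L (0, 1) = fr := by
    have := hL.comp_hasDerivAt (x t) ((hasDerivAt_const (x t) t).prodMk (hasDerivAt_id (x t)))
    exact this.unique hr
  have hsplit : ((1 : ℝ), v) = (1, 0) + v • ((0 : ℝ), (1 : ℝ)) := by simp
  have hchain := hL.comp_hasDerivAt t ((hasDerivAt_id t).prodMk hx)
  rwa [hsplit, map_add, map_smul, hL₁, hL₂] at hchain

theorem Convex.mul_sub_le_image_sub_of_hasDerivAt_ge {D : Set ℝ} (hD : Convex ℝ D)
    {f : ℝ → ℝ} {C : ℝ} (hf : ∀ x ∈ D, ∃ d, HasDerivAt f d x ∧ C ≤ d) :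
    ∀ x ∈ D, ∀ y ∈ D, x ≤ y → C * (y - x) ≤ f y - f x := by
  choose f' hf' hCf' using hf
  refine hD.mul_sub_le_image_sub_of_le_deriv
    (fun x hx => (hf' x hx).continuousAt.continuousWithinAt)
    (fun x hx => (hf' x (interior_subset hx)).differentiableAt.differentiableWithinAt)
    (fun x hx => ?_)
  rw [(hf' x (interior_subset hx)).deriv]
  exact hCf' x _

theorem neg_le_div_add_mul_sub {ρ j δ : ℝ} (hρ : 0 ≤ ρ) (hj : j ≤ 0) (hδ : 0 < δ) :
    -δ ≤ (j - δ) / (ρ + δ) * ρ - j := by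
  have hρδ : 0 < ρ + δ := by linarith
  have hid : (j - δ) / (ρ + δ) * ρ - j = -δ * ((ρ + j) / (ρ + δ)) := by
    field_simp
    ring
  have hratio : (ρ + j) / (ρ + δ) ≤ 1 := (div_le_one hρδ).mpr (by linarith)
  rw [hid]
  nlinarith

theorem mass_flux_along_transport_ge {r R e ρ j δ : ℝ} (hr : 0 ≤ r) (hrR : r ≤ R)
    (he : 0 ≤ e) (he₁ : e ≤ 1) (hρ : 0 ≤ ρ) (hj : j ≤ 0) (hδ : 0 < δ) :
    -(4 * π * R ^ 2 * δ) ≤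
      -4 * π * r ^ 2 * e * j + (j - δ) / (ρ + δ) * e * (4 * π * r ^ 2 * ρ) := by
  have hr2e : r ^ 2 * e ≤ R ^ 2 :=
    (mul_le_of_le_one_right (sq_nonneg r) he₁).trans (pow_le_pow_left₀ hr hrR 2)
  calc -(4 * π * R ^ 2 * δ) ≤ 4 * π * (r ^ 2 * e) * -δ := by
        have := mul_le_mul_of_nonneg_right hr2e hδ.le
        nlinarith [pi_pos]
    _ ≤ 4 * π * (r ^ 2 * e) * ((j - δ) / (ρ + δ) * ρ - j) :=
        mul_le_mul_of_nonneg_left (neg_le_div_add_mul_sub hρ hj hδ) (by positivity)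
    _ = -4 * π * r ^ 2 * e * j + (j - δ) / (ρ + δ) * e * (4 * π * r ^ 2 * ρ) := by ring

theorem mass_transport_estimate_general
    (T R₁ δ : ℝ) (hδ : 0 < δ)
    (m mulam ρ j : ℝ → ℝ → ℝ) (α : ℝ → ℝ)
    (hmC1 : ContDiff ℝ 1 (fun q : ℝ × ℝ => m q.1 q.2))
    (hmt : ∀ t r : ℝ, HasDerivAt (fun s => m s r)
      (-4 * π * r ^ 2 * Real.exp (mulam t r) * j t r) t)
    (hmr : ∀ t r : ℝ, HasDerivAt (fun u => m t u) (4 * π * r ^ 2 * ρ t r) r)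
    (hj : ∀ t r, j t r ≤ 0) (hρ : ∀ t r, 0 ≤ ρ t r)
    (hmulam : ∀ t r, Real.exp (mulam t r) ≤ 1)
    (hαpos : ∀ t ∈ Set.Icc (0:ℝ) T, 0 < α t)
    (hαle : ∀ t ∈ Set.Icc (0:ℝ) T, α t ≤ R₁)
    (hα : ∀ t ∈ Set.Icc (0:ℝ) T, HasDerivAt α
      ((j t (α t) - δ) / (ρ t (α t) + δ) * Real.exp (mulam t (α t))) t) :
    (∀ t ∈ Set.Icc (0:ℝ) T, ∃ d : ℝ,
      HasDerivAt (fun s => m s (α s)) d t ∧ d ≥ -(4 * π * R₁ ^ 2 * δ)) ∧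
    (∀ t ∈ Set.Icc (0:ℝ) T, m t (α t) ≥ m 0 (α 0) - 4 * π * R₁ ^ 2 * δ * t) := by
  have hderiv : ∀ t ∈ Icc (0:ℝ) T, ∃ d : ℝ,
      HasDerivAt (fun s => m s (α s)) d t ∧ d ≥ -(4 * π * R₁ ^ 2 * δ) := fun t ht =>
    ⟨_, hasDerivAt_comp_curve_of_partials ((hmC1.differentiable one_ne_zero) _)
        (hmt t (α t)) (hmr t (α t)) (hα t ht),
      mass_flux_along_transport_ge (hαpos t ht).le (hαle t ht) (exp_pos _).le (hmulam t _)
        (hρ t _) (hj t _) hδ⟩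
  refine ⟨hderiv, fun t ht => ?_⟩
  have hgrowth := (convex_Icc 0 T).mul_sub_le_image_sub_of_hasDerivAt_ge hderiv
    0 ⟨le_rfl, ht.1.trans ht.2⟩ t ht ht.1
  linarith

theorem mass_transport_estimate
    (T R₁ δ : ℝ) (hT : 0 < T) (hR₁ : 0 < R₁) (hδ : 0 < δ)
    (m mulam ρ j : ℝ → ℝ → ℝ) (α : ℝ → ℝ)
    (hmC1 : ContDiff ℝ 1 (fun q : ℝ × ℝ => m q.1 q.2))
    (hmt : ∀ t r : ℝ, HasDerivAt (fun s => m s r)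
      (-4 * π * r ^ 2 * Real.exp (mulam t r) * j t r) t)
    (hmr : ∀ t r : ℝ, HasDerivAt (fun u => m t u) (4 * π * r ^ 2 * ρ t r) r)
    (hj : ∀ t r, j t r ≤ 0) (hρ : ∀ t r, 0 ≤ ρ t r)
    (hmulam : ∀ t r, Real.exp (mulam t r) ≤ 1)
    (hαpos : ∀ t ∈ Set.Icc (0:ℝ) T, 0 < α t)
    (hαle : ∀ t ∈ Set.Icc (0:ℝ) T, α t ≤ R₁)
    (hα : ∀ t ∈ Set.Icc (0:ℝ) T, HasDerivAt α
      ((j t (α t) - δ) / (ρ t (α t) + δ) * Real.exp (mulam t (α t))) t) :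
    (∀ t ∈ Set.Icc (0:ℝ) T, ∃ d : ℝ,
      HasDerivAt (fun s => m s (α s)) d t ∧ d ≥ -(4 * π * R₁ ^ 2 * δ)) ∧
    (∀ t ∈ Set.Icc (0:ℝ) T, m t (α t) ≥ m 0 (α 0) - 4 * π * R₁ ^ 2 * δ * t) :=
  mass_transport_estimate_general T R₁ δ hδ m mulam ρ j α hmC1 hmt hmr hj hρ hmulam hαpos hαle hα
end
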